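/- Let (Ω, μ) be a measure space, let θ > 0, and let ρ, c : Ω → ℝ be measurable with ρ ≥ 0 μ-a.e. Suppose there is a constant C ≥ 0 such that ∫ ρ·(F_ε'(c))² dμ ≤ C for every ε ∈ (0,1). Then |c| < 1 holds μ-almost everywhere on the set {x ∈ Ω : ρ(x) > 0}; i.e. the set {x : ρ(x) > 0 and |c(x)| ≥ 1} is μ-null. -/

import Mathlib

open Real Set Filter MeasureTheory

/-- The Flory–Huggins potential. -/
noncomputable def FH (θ s : ℝ) : ℝ :=
  (θ / 2) * ((1 + s) * Real.log (1 + s) + (1 - s) * Real.log (1 - s))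

/-- Its first derivative on `(-1,1)`. -/
noncomputable def FH' (θ s : ℝ) : ℝ :=
  (θ / 2) * Real.log ((1 + s) / (1 - s))

/-- The regularized (quadratic extension) Flory–Huggins potential `F_ε`.
Note that `F''(±(1-ε)) = θ/(ε(2-ε))`. -/
noncomputable def FHreg (θ ε s : ℝ) : ℝ :=
  if 1 - ε < s then
    FH θ (1 - ε) + FH' θ (1 - ε) * (s - (1 - ε))
      + (1 / 2) * (θ / (ε * (2 - ε))) * (s - (1 - ε)) ^ 2
  else if s < -1 + ε then
    FH θ (-1 + ε) + FH' θ (-1 + ε) * (s - (-1 + ε))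
      + (1 / 2) * (θ / (ε * (2 - ε))) * (s - (-1 + ε)) ^ 2
  else FH θ s

/-! On `{|c| ≥ 1}` the quadratic extension `F_ε` has slope of modulus at least
`F'(1 - ε) = (θ/2) log((2 - ε)/ε)`, which tends to `∞` as `ε → 0`. The uniform bound therefore
gives `F'(1 - ε)² ∫_{ρ > 0, |c| ≥ 1} ρ dμ ≤ C` for all small `ε`, so this integral vanishes, and
since `ρ > 0` on its domain, the domain is null. -/

open Topology
open scoped ENNReal

lemma FH'_neg (θ s : ℝ) : FH' θ (-s) = -FH' θ s := by
  rw [FH', FH', sub_neg_eq_add, ← sub_eq_add_neg,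
    show (1 - s) / (1 + s) = ((1 + s) / (1 - s))⁻¹ from (inv_div _ _).symm, Real.log_inv, mul_neg]

lemma FH'_one_sub (θ ε : ℝ) : FH' θ (1 - ε) = θ / 2 * Real.log ((2 - ε) / ε) := by
  rw [FH', sub_sub_cancel, show (1 : ℝ) + (1 - ε) = 2 - ε by ring]

lemma hasDerivAt_quadratic (a b k t s : ℝ) :
    HasDerivAt (fun s => a + b * (s - t) + 1 / 2 * k * (s - t) ^ 2) (b + k * (s - t)) s := by
  have hlin : HasDerivAt (fun s : ℝ => s - t) 1 s := (hasDerivAt_id s).sub_const t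
  exact (((hlin.const_mul b).const_add a).add ((hlin.pow 2).const_mul (1 / 2 * k))).congr_deriv
    (by ring)

lemma deriv_FHreg_of_gt {θ ε s : ℝ} (hs : 1 - ε < s) :
    deriv (FHreg θ ε) s = FH' θ (1 - ε) + θ / (ε * (2 - ε)) * (s - (1 - ε)) := by
  have heq : FHreg θ ε =ᶠ[𝓝 s] fun s => FH θ (1 - ε) + FH' θ (1 - ε) * (s - (1 - ε))
      + 1 / 2 * (θ / (ε * (2 - ε))) * (s - (1 - ε)) ^ 2 := by
    filter_upwards [Ioi_mem_nhds hs] with t (ht : 1 - ε < t)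
    rw [FHreg, if_pos ht]
  rw [heq.deriv_eq, (hasDerivAt_quadratic _ _ _ _ s).deriv]

lemma deriv_FHreg_of_lt {θ ε s : ℝ} (hs : s < -1 + ε) (hs' : s < 1 - ε) :
    deriv (FHreg θ ε) s = FH' θ (-1 + ε) + θ / (ε * (2 - ε)) * (s - (-1 + ε)) := by
  have heq : FHreg θ ε =ᶠ[𝓝 s] fun s => FH θ (-1 + ε) + FH' θ (-1 + ε) * (s - (-1 + ε))
      + 1 / 2 * (θ / (ε * (2 - ε))) * (s - (-1 + ε)) ^ 2 := by
    filter_upwards [Iio_mem_nhds hs, Iio_mem_nhds hs'] with t (ht : t < -1 + ε) (ht' : t < 1 - ε)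
    rw [FHreg, if_neg (not_lt.2 ht'.le), if_pos ht]
  rw [heq.deriv_eq, (hasDerivAt_quadratic _ _ _ _ s).deriv]

lemma FH'_one_sub_le_abs_deriv_FHreg {θ ε s : ℝ} (hθ : 0 ≤ θ) (hε : 0 < ε) (hε2 : ε < 2)
    (hs : 1 ≤ |s|) : FH' θ (1 - ε) ≤ |deriv (FHreg θ ε) s| := by
  have hK : 0 ≤ θ / (ε * (2 - ε)) := div_nonneg hθ (mul_nonneg hε.le (by linarith))
  rcases le_abs'.1 hs with hs | hs
  · rw [deriv_FHreg_of_lt (by linarith) (by linarith), show -1 + ε = -(1 - ε) by ring, FH'_neg]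
    have := mul_nonpos_of_nonneg_of_nonpos hK (by linarith : s - -(1 - ε) ≤ 0)
    exact le_abs.2 (Or.inr (by linarith))
  · rw [deriv_FHreg_of_gt (by linarith)]
    have := mul_nonneg hK (by linarith : 0 ≤ s - (1 - ε))
    exact le_abs.2 (Or.inl (by linarith))

lemma FH'_one_sub_nonneg {θ ε : ℝ} (hθ : 0 ≤ θ) (hε : 0 < ε) (hε1 : ε ≤ 1) :
    0 ≤ FH' θ (1 - ε) := by
  rw [FH'_one_sub]
  exact mul_nonneg (by positivity) (Real.log_nonneg ((one_le_div hε).2 (by linarith)))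

lemma tendsto_FH'_one_sub {θ : ℝ} (hθ : 0 < θ) :
    Tendsto (fun ε => FH' θ (1 - ε)) (𝓝[>] 0) atTop := by
  have hlog : Tendsto (fun ε : ℝ => θ / 2 * Real.log ε⁻¹) (𝓝[>] 0) atTop :=
    (Real.tendsto_log_atTop.comp tendsto_inv_nhdsGT_zero).const_mul_atTop (by positivity)
  refine tendsto_atTop_mono' _ ?_ hlog
  filter_upwards [Ioo_mem_nhdsGT one_pos] with ε ⟨hε0, hε1⟩
  rw [FH'_one_sub, inv_eq_one_div]
  gcongr
  linarith

lemma eq_zero_of_tendsto_top_of_mul_le {α : Type*} {l : Filter α} [l.NeBot] {f : α → ℝ≥0∞}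
    {a C : ℝ≥0∞} (hf : Tendsto f l (𝓝 ∞)) (hC : C ≠ ∞) (h : ∀ᶠ x in l, f x * a ≤ C) :
    a = 0 := by
  by_contra ha
  have htop : Tendsto (fun x => f x * a) l (𝓝 ∞) := by
    simpa [ENNReal.top_mul ha] using
      ENNReal.Tendsto.mul_const (b := a) hf (Or.inl ENNReal.top_ne_zero)
  obtain ⟨x, hCx, hxC⟩ := ((htop.eventually (lt_mem_nhds hC.lt_top)).and h).exists
  exact (hCx.trans_le hxC).false

lemma ofReal_sq_FH'_mul_setLIntegral_le {Ω : Type*} [MeasurableSpace Ω] (μ : Measure Ω)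
    {ρ c : Ω → ℝ} {S : Set Ω} (hS : MeasurableSet S) (hρS : ∀ x ∈ S, 0 ≤ ρ x)
    (hcS : ∀ x ∈ S, 1 ≤ |c x|) {θ ε : ℝ} (hθ : 0 ≤ θ) (hε : 0 < ε) (hε1 : ε ≤ 1) :
    ENNReal.ofReal (FH' θ (1 - ε) ^ 2) * ∫⁻ x in S, ENNReal.ofReal (ρ x) ∂μ
      ≤ ∫⁻ x, ENNReal.ofReal (ρ x * deriv (FHreg θ ε) (c x) ^ 2) ∂μ := by
  rw [← lintegral_const_mul' _ _ ENNReal.ofReal_ne_top]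
  refine le_trans (setLIntegral_mono' hS fun x hx => ?_) (setLIntegral_le_lintegral S _)
  rw [← ENNReal.ofReal_mul (sq_nonneg _), mul_comm, ← sq_abs (deriv (FHreg θ ε) (c x))]
  have hslope := FH'_one_sub_le_abs_deriv_FHreg hθ hε (by linarith) (hcS x hx)
  exact ENNReal.ofReal_le_ofReal <| mul_le_mul_of_nonneg_left
    (pow_le_pow_left₀ (FH'_one_sub_nonneg hθ hε hε1) hslope 2) (hρS x hx)

theorem concentration_physical_range_general (θ : ℝ) (hθ : 0 < θ)
    {Ω : Type*} [MeasurableSpace Ω] (μ : Measure Ω)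
    (ρ c : Ω → ℝ) (hρ : Measurable ρ) (hc : Measurable c)
    (C : ℝ)
    (hbound : ∀ ε ∈ Set.Ioo (0 : ℝ) 1,
      ∫⁻ x, ENNReal.ofReal (ρ x * deriv (FHreg θ ε) (c x) ^ 2) ∂μ ≤ ENNReal.ofReal C) :
    μ {x | 0 < ρ x ∧ 1 ≤ |c x|} = 0 := by
  set S := {x | 0 < ρ x ∧ 1 ≤ |c x|}
  have hS : MeasurableSet S :=
    (measurableSet_lt measurable_const hρ).inter (measurableSet_le measurable_const hc.abs)
  have hweight : ∫⁻ x in S, ENNReal.ofReal (ρ x) ∂μ = 0 := by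
    refine eq_zero_of_tendsto_top_of_mul_le (ENNReal.tendsto_ofReal_atTop.comp
      ((tendsto_pow_atTop two_ne_zero).comp (tendsto_FH'_one_sub hθ)))
      (ENNReal.ofReal_ne_top (r := C)) ?_
    filter_upwards [Ioo_mem_nhdsGT one_pos] with ε hε
    exact (ofReal_sq_FH'_mul_setLIntegral_le μ hS (fun x hx => hx.1.le) (fun x hx => hx.2) hθ.le
      hε.1 hε.2.le).trans (hbound ε hε)
  have hsupport : Function.support (fun x => ENNReal.ofReal (ρ x)) ∩ S = S :=
    inter_eq_right.2 fun x hx => (ENNReal.ofReal_pos.2 hx.1).ne'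
  by_contra hne
  have hpos := (setLIntegral_pos_iff (μ := μ) hρ.ennreal_ofReal (s := S)).2
    (by rwa [hsupport, pos_iff_ne_zero])
  exact hpos.ne' hweight

theorem concentration_physical_range (θ : ℝ) (hθ : 0 < θ)
    {Ω : Type*} [MeasurableSpace Ω] (μ : Measure Ω)
    (ρ c : Ω → ℝ) (hρ : Measurable ρ) (hc : Measurable c)
    (hρ0 : ∀ᵐ x ∂μ, 0 ≤ ρ x) (C : ℝ) (hC : 0 ≤ C)
    (hbound : ∀ ε ∈ Set.Ioo (0 : ℝ) 1,
      ∫⁻ x, ENNReal.ofReal (ρ x * deriv (FHreg θ ε) (c x) ^ 2) ∂μ ≤ ENNReal.ofReal C) :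
    μ {x | 0 < ρ x ∧ 1 ≤ |c x|} = 0 :=
  concentration_physical_range_general θ hθ μ ρ c hρ hc C hbound
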